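/- The function c ↦ c^{n+1}·Z(c) is logconcave on (0, ∞): for all c, d > 0 and all t ∈ [0, 1], ((1−t)c + td)^{n+1} · Z((1−t)c + td) ≥ (c^{n+1} Z(c))^{1−t} · (d^{n+1} Z(d))^{t}. -/

import Mathlib

open MeasureTheory

open Set Pointwise
open scoped ENNReal NNReal

set_option maxHeartbeats 1000000

lemma vol_image_add_right (K : Set ℝ) (b : ℝ) : volume ((fun x => x + b) '' K) = volume K := by
  have h : (fun x => x + b) '' K = (fun x => x + (-b)) ⁻¹' K := by
    ext z; constructor
    · rintro ⟨x, hx, rfl⟩; simpa using hx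
    · intro hz; exact ⟨z - b, by rw [sub_eq_add_neg]; exact hz, by ring⟩
  rw [h, measure_preimage_add_right]

lemma vol_image_add_left (L : Set ℝ) (a : ℝ) : volume ((fun y => a + y) '' L) = volume L := by
  have h : (fun y => a + y) '' L = (fun y => (-a) + y) ⁻¹' L := by
    ext z; constructor
    · rintro ⟨y, hy, rfl⟩; simpa using hy
    · intro hz; exact ⟨-a + z, by simpa using hz, by ring⟩
  rw [h, measure_preimage_add]

/-- One-dimensional superadditivity of Lebesgue measure under set addition. -/
lemma sumset_superadd {A B S : Set ℝ} (hA : MeasurableSet A) (hB : MeasurableSet B)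
    (hAne : A.Nonempty) (hBne : B.Nonempty)
    (hsub : ∀ a ∈ A, ∀ b ∈ B, a + b ∈ S) :
    volume A + volume B ≤ volume S := by
  obtain ⟨a₀, ha₀⟩ := hAne
  obtain ⟨b₀, hb₀⟩ := hBne
  have htransL : ∀ L : Set ℝ, L ⊆ B → volume L ≤ volume S := by
    intro L hLB
    rw [← vol_image_add_left L a₀]
    exact measure_mono (by rintro z ⟨y, hy, rfl⟩; exact hsub a₀ ha₀ y (hLB hy))
  have htransK : ∀ K : Set ℝ, K ⊆ A → volume K ≤ volume S := by
    intro K hKA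
    rw [← vol_image_add_right K b₀]
    exact measure_mono (by rintro z ⟨x, hx, rfl⟩; exact hsub x (hKA hx) b₀ hb₀)
  have key : ∀ (K L : Set ℝ), IsCompact K → IsCompact L →
      K ⊆ A → L ⊆ B → volume K + volume L ≤ volume S := by
    intro K L hK hL hKA hLB
    rcases K.eq_empty_or_nonempty with rfl | hKne
    · simpa using htransL L hLB
    rcases L.eq_empty_or_nonempty with rfl | hLne
    · simpa using htransK K hKA
    set a := sSup K with ha
    set b := sInf L with hb
    have haK : a ∈ K := hK.sSup_mem hKne
    have hbL : b ∈ L := hL.sInf_mem hLne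
    have h1 : ((fun x => x + b) '' K) ∪ ((fun y => a + y) '' L) ⊆ S := by
      rintro z (⟨x, hx, rfl⟩ | ⟨y, hy, rfl⟩)
      · exact hsub x (hKA hx) b (hLB hbL)
      · exact hsub a (hKA haK) y (hLB hy)
    have hYm : MeasurableSet ((fun y => a + y) '' L) :=
      (hL.image (continuous_add_left a)).measurableSet
    have hinter : ((fun x => x + b) '' K) ∩ ((fun y => a + y) '' L) ⊆ {a + b} := by
      rintro z ⟨⟨x, hx, rfl⟩, ⟨y, hy, hxy⟩⟩
      have hxy' : a + y = x + b := hxy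
      have hxa : x ≤ a := le_csSup hK.bddAbove hx
      have hby : b ≤ y := csInf_le hL.bddBelow hy
      have hx' : x + b = a + b := by linarith
      simpa using hx'
    calc volume K + volume L
        = volume (((fun x => x + b) '' K) ∪ ((fun y => a + y) '' L))
            + volume (((fun x => x + b) '' K) ∩ ((fun y => a + y) '' L)) := by
          rw [measure_union_add_inter _ hYm, vol_image_add_right, vol_image_add_left]
      _ ≤ volume S + 0 :=
          add_le_add (measure_mono h1)
            (le_trans (measure_mono hinter) (by simp))
      _ = volume S := by simp
  rw [hA.measure_eq_iSup_isCompact, hB.measure_eq_iSup_isCompact]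
  refine ENNReal.iSup_add_iSup_le fun K L => ?_
  by_cases hKA : K ⊆ A
  · by_cases hK : IsCompact K
    · by_cases hLB : L ⊆ B
      · by_cases hL : IsCompact L
        · simpa [hKA, hK, hLB, hL] using key K L hK hL hKA hLB
        · simpa [hKA, hK, hLB, hL] using htransK K hKA
      · simpa [hKA, hK, hLB] using htransK K hKA
    · by_cases hLB : L ⊆ B
      · by_cases hL : IsCompact L
        · simpa [hKA, hK, hLB, hL] using htransL L hLB
        · simp [hKA, hK, hLB, hL]
      · simp [hKA, hK, hLB]
  · by_cases hLB : L ⊆ B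
    · by_cases hL : IsCompact L
      · simpa [hKA, hLB, hL] using htransL L hLB
      · simp [hKA, hLB, hL]
    · simp [hKA, hLB]

/-- Weighted AM-GM for two ENNReal numbers. -/
lemma ennreal_amgm2 {t : ℝ} (ht0 : 0 < t) (ht1 : t < 1) (a b : ℝ≥0∞) :
    a ^ (1 - t) * b ^ t ≤ ENNReal.ofReal (1 - t) * a + ENNReal.ofReal t * b := by
  have h1t : (0:ℝ) < 1 - t := by linarith
  rcases eq_or_ne a ⊤ with rfl | ha
  · rcases eq_or_ne b 0 with rfl | hb
    · rw [ENNReal.zero_rpow_of_pos ht0, mul_zero]; exact zero_le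
    · have : ENNReal.ofReal (1 - t) * (⊤ : ℝ≥0∞) = ⊤ :=
        ENNReal.mul_top (by simp [ENNReal.ofReal_eq_zero]; linarith)
      rw [this]; exact le_top.trans_eq (by simp)
  rcases eq_or_ne b ⊤ with rfl | hb
  · rcases eq_or_ne a 0 with rfl | ha0
    · rw [ENNReal.zero_rpow_of_pos h1t, zero_mul]; exact zero_le
    · have : ENNReal.ofReal t * (⊤ : ℝ≥0∞) = ⊤ :=
        ENNReal.mul_top (by simp [ENNReal.ofReal_eq_zero]; linarith)
      rw [this]; simp
  lift a to NNReal using ha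
  lift b to NNReal using hb
  have key := NNReal.geom_mean_le_arith_mean2_weighted (w₁ := (1-t).toNNReal)
    (w₂ := t.toNNReal) (p₁ := a) (p₂ := b) ?_
  · have e1 : ((1-t).toNNReal : ℝ) = 1 - t := Real.coe_toNNReal _ h1t.le
    have e2 : ((t).toNNReal : ℝ) = t := Real.coe_toNNReal _ ht0.le
    rw [e1, e2] at key
    have := ENNReal.coe_le_coe.2 key
    push_cast at this
    rw [ENNReal.coe_rpow_of_nonneg _ h1t.le, ENNReal.coe_rpow_of_nonneg _ ht0.le] at this
    have r1 : ENNReal.ofReal (1-t) = ((1-t).toNNReal : ℝ≥0∞) := rfl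
    have r2 : ENNReal.ofReal t = ((t).toNNReal : ℝ≥0∞) := rfl
    rw [r1, r2]
    convert this using 2 <;> push_cast [Real.coe_toNNReal _ h1t.le, Real.coe_toNNReal _ ht0.le] <;> ring
  · have : ((1:ℝ)).toNNReal = 1 := Real.toNNReal_one
    rw [← Real.toNNReal_add h1t.le ht0.le]; norm_num

/-- Layer cake for an `ℝ≥0∞`-valued function bounded by 1. -/
lemma layercake_le_one (φ : ℝ → ℝ≥0∞) (hφ : Measurable φ) (hφ1 : ∀ x, φ x ≤ 1) :
    ∫⁻ x, φ x = ∫⁻ u in Set.Ioi (0:ℝ), volume {x : ℝ | ENNReal.ofReal u < φ x} := by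
  have hne : ∀ x, φ x ≠ ⊤ := fun x => ((hφ1 x).trans_lt ENNReal.one_lt_top).ne
  set F : ℝ → ℝ := fun x => (φ x).toReal with hF
  have hFm : Measurable F := ENNReal.measurable_toReal.comp hφ
  have key := lintegral_eq_lintegral_meas_lt volume
    (f := F) (Filter.Eventually.of_forall fun x => ENNReal.toReal_nonneg) hFm.aemeasurable
  have lhs : ∫⁻ x, ENNReal.ofReal (F x) = ∫⁻ x, φ x := by
    apply lintegral_congr; intro x; exact ENNReal.ofReal_toReal (hne x)
  rw [lhs] at key
  rw [key]
  apply setLIntegral_congr_fun measurableSet_Ioi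
  intro u hu
  dsimp only
  congr 1
  ext x
  simp only [Set.mem_setOf_eq]
  exact (ENNReal.ofReal_lt_iff_lt_toReal (le_of_lt hu) (hne x)).symm

/-- 1-dimensional Prékopa–Leindler inequality for bounded measurable `ℝ≥0∞`-valued functions. -/
lemma prekopa_leindler_dim1 {t : ℝ} (ht0 : 0 < t) (ht1 : t < 1)
    (f g h : ℝ → ℝ≥0∞) (hf : Measurable f) (hg : Measurable g) (hh : Measurable h)
    (Cf Cg : ℝ≥0∞) (hCf : Cf ≠ ⊤) (hCg : Cg ≠ ⊤)
    (hfb : ∀ x, f x ≤ Cf) (hgb : ∀ x, g x ≤ Cg)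
    (hPL : ∀ x y, f x ^ (1 - t) * g y ^ t ≤ h ((1 - t) * x + t * y)) :
    (∫⁻ x, f x) ^ (1 - t) * (∫⁻ x, g x) ^ t ≤ ∫⁻ x, h x := by
  have h1t : (0:ℝ) < 1 - t := by linarith
  set Sf := ⨆ x, f x with hSf
  set Sg := ⨆ x, g x with hSg
  have hSf_top : Sf ≠ ⊤ := ((iSup_le hfb).trans_lt hCf.lt_top).ne
  have hSg_top : Sg ≠ ⊤ := ((iSup_le hgb).trans_lt hCg.lt_top).ne
  rcases eq_or_ne Sf 0 with hSf0 | hSf0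
  · have : ∀ x, f x = 0 := fun x => le_antisymm (hSf0 ▸ le_iSup f x) zero_le
    rw [lintegral_congr this, lintegral_zero, ENNReal.zero_rpow_of_pos h1t, zero_mul]
    exact zero_le
  rcases eq_or_ne Sg 0 with hSg0 | hSg0
  · have : ∀ x, g x = 0 := fun x => le_antisymm (hSg0 ▸ le_iSup g x) zero_le
    rw [lintegral_congr this, lintegral_zero, ENNReal.zero_rpow_of_pos ht0, mul_zero]
    exact zero_le
  -- normalized functions
  set f' : ℝ → ℝ≥0∞ := fun x => f x / Sf with hf'def
  set g' : ℝ → ℝ≥0∞ := fun x => g x / Sg with hg'def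
  set N : ℝ≥0∞ := Sf ^ (1 - t) * Sg ^ t with hN
  have hN0 : N ≠ 0 := by
    simp only [hN, mul_ne_zero_iff]
    constructor <;> simp [ENNReal.rpow_eq_zero_iff, hSf0, hSg0, hSf_top, hSg_top]
  have hN_top : N ≠ ⊤ := by
    simp only [hN]
    exact ENNReal.mul_ne_top (by simp [ENNReal.rpow_eq_top_iff, hSf0, hSf_top])
      (by simp [ENNReal.rpow_eq_top_iff, hSg0, hSg_top])
  set h' : ℝ → ℝ≥0∞ := fun z => h z / N with hh'def
  have hf'm : Measurable f' := hf.div_const _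
  have hg'm : Measurable g' := hg.div_const _
  have hh'm : Measurable h' := hh.div_const _
  have hf'1 : ∀ x, f' x ≤ 1 := fun x => ENNReal.div_le_of_le_mul (by rw [one_mul]; exact le_iSup f x)
  have hg'1 : ∀ x, g' x ≤ 1 := fun x => ENNReal.div_le_of_le_mul (by rw [one_mul]; exact le_iSup g x)
  have hf'top : ∀ x, f' x ≠ ⊤ := fun x => ((hf'1 x).trans_lt ENNReal.one_lt_top).ne
  have hPL' : ∀ x y, f' x ^ (1 - t) * g' y ^ t ≤ h' ((1 - t) * x + t * y) := by
    intro x y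
    have e1 : f' x ^ (1-t) * g' y ^ t = (f x ^ (1-t) * g y ^ t) / N := by
      rw [hf'def, hg'def, ENNReal.div_rpow_of_nonneg _ _ h1t.le,
        ENNReal.div_rpow_of_nonneg _ _ ht0.le]
      rw [div_eq_mul_inv, div_eq_mul_inv, div_eq_mul_inv, hN,
        ENNReal.mul_inv (Or.inl (by simp [ENNReal.rpow_eq_zero_iff, hSf0, hSf_top]))
          (Or.inl (by simp [ENNReal.rpow_eq_top_iff, hSf0, hSf_top]))]
      ring
    rw [e1]
    exact ENNReal.div_le_div_right (hPL x y) N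
  -- level sets
  set A : ℝ → Set ℝ := fun u => {x | ENNReal.ofReal u < f' x} with hA
  set B : ℝ → Set ℝ := fun u => {x | ENNReal.ofReal u < g' x} with hB
  set C : ℝ → Set ℝ := fun u => {x | ENNReal.ofReal u < h' x} with hC
  have hAm : ∀ u, MeasurableSet (A u) := fun u => measurableSet_lt measurable_const hf'm
  have hBm : ∀ u, MeasurableSet (B u) := fun u => measurableSet_lt measurable_const hg'm
  have hCm : ∀ u, MeasurableSet (C u) := fun u => measurableSet_lt measurable_const hh'm
  -- nonemptiness for 0 < u < 1
  have hlevel_ne : ∀ (φ : ℝ → ℝ≥0∞) (S : ℝ≥0∞), S = ⨆ x, φ x → S ≠ 0 → S ≠ ⊤ →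
      ∀ u : ℝ, u < 1 → {x | ENNReal.ofReal u < φ x / S}.Nonempty := by
    intro φ S hS hS0 hStop u hu
    have h1 : ENNReal.ofReal u * S < S := by
      calc ENNReal.ofReal u * S < 1 * S := by
            rw [ENNReal.mul_lt_mul_iff_left hS0 hStop]
            exact ENNReal.ofReal_lt_one.2 hu
        _ = S := one_mul S
    obtain ⟨x, hx⟩ := lt_iSup_iff.1 (hS ▸ h1 : ENNReal.ofReal u * S < ⨆ x, φ x)
    exact ⟨x, (ENNReal.lt_div_iff_mul_lt (Or.inl hS0) (Or.inl hStop)).2 hx⟩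
  have hAne : ∀ u : ℝ, u < 1 → (A u).Nonempty :=
    fun u hu => hlevel_ne f Sf hSf hSf0 hSf_top u hu
  have hBne : ∀ u : ℝ, u < 1 → (B u).Nonempty :=
    fun u hu => hlevel_ne g Sg hSg hSg0 hSg_top u hu
  -- key level-set estimate for 0 < u < 1
  have hkey : ∀ u : ℝ, 0 < u → u < 1 →
      ENNReal.ofReal (1-t) * volume (A u) + ENNReal.ofReal t * volume (B u) ≤ volume (C u) := by
    intro u hu0 hu1
    have hXm : MeasurableSet ((1-t) • A u) := (hAm u).const_smul₀ (1-t)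
    have hYm : MeasurableSet (t • B u) := (hBm u).const_smul₀ t
    have hXne : ((1-t) • A u).Nonempty := (hAne u hu1).smul_set
    have hYne : (t • B u).Nonempty := (hBne u hu1).smul_set
    have hsub : ∀ p ∈ (1-t) • A u, ∀ q ∈ t • B u, p + q ∈ C u := by
      rintro p ⟨x, hx, rfl⟩ q ⟨y, hy, rfl⟩
      simp only [smul_eq_mul]
      have hx' : ENNReal.ofReal u < f' x := hx
      have hy' : ENNReal.ofReal u < g' y := hy
      set m := min (f' x) (g' y) with hm
      have hm0 : m ≠ 0 := by
        have h0u : (0:ℝ≥0∞) < ENNReal.ofReal u := ENNReal.ofReal_pos.2 hu0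
        exact (h0u.trans (lt_min hx' hy')).ne'
      have hmtop : m ≠ ⊤ :=
        ((min_le_left _ _).trans_lt ((hf'1 x).trans_lt ENNReal.one_lt_top)).ne
      show ENNReal.ofReal u < h' ((1-t)*x + t*y)
      calc ENNReal.ofReal u < m := lt_min hx' hy'
        _ = m ^ (1-t) * m ^ t := by
            rw [← ENNReal.rpow_add _ _ hm0 hmtop]; norm_num
        _ ≤ f' x ^ (1-t) * g' y ^ t :=
            mul_le_mul' (ENNReal.rpow_le_rpow (min_le_left _ _) h1t.le)
              (ENNReal.rpow_le_rpow (min_le_right _ _) ht0.le)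
        _ ≤ h' ((1-t)*x + t*y) := hPL' x y
    have hsuper := sumset_superadd hXm hYm hXne hYne hsub
    have hXvol : volume ((1-t) • A u) = ENNReal.ofReal (1-t) * volume (A u) := by
      rw [Measure.addHaar_smul]
      congr 2
      simp [abs_of_pos h1t]
    have hYvol : volume (t • B u) = ENNReal.ofReal t * volume (B u) := by
      rw [Measure.addHaar_smul]
      congr 2
      simp [abs_of_pos ht0]
    calc ENNReal.ofReal (1-t) * volume (A u) + ENNReal.ofReal t * volume (B u)
        = volume ((1-t) • A u) + volume (t • B u) := by rw [hXvol, hYvol]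
      _ ≤ volume (C u) := hsuper
  -- emptiness of level sets above 1
  have hAempty : ∀ u : ℝ, 1 ≤ u → volume (A u) = 0 := by
    intro u hu
    have : A u = ∅ := by
      ext x
      simp only [hA, Set.mem_setOf_eq, Set.mem_empty_iff_false, iff_false, not_lt]
      exact (hf'1 x).trans (ENNReal.one_le_ofReal.2 hu)
    rw [this, measure_empty]
  have hBempty : ∀ u : ℝ, 1 ≤ u → volume (B u) = 0 := by
    intro u hu
    have : B u = ∅ := by
      ext x
      simp only [hB, Set.mem_setOf_eq, Set.mem_empty_iff_false, iff_false, not_lt]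
      exact (hg'1 x).trans (ENNReal.one_le_ofReal.2 hu)
    rw [this, measure_empty]
  -- restriction of the layer-cake integrals to (0,1)
  have hIoi_eq : ∀ (V : ℝ → ℝ≥0∞), (∀ u, 1 ≤ u → V u = 0) →
      ∫⁻ u in Set.Ioi (0:ℝ), V u = ∫⁻ u in Set.Ioo (0:ℝ) 1, V u := by
    intro V hV
    rw [← Set.Ioo_union_Ici_eq_Ioi (zero_lt_one (α := ℝ)),
      lintegral_union measurableSet_Ici ((Set.Iio_disjoint_Ici le_rfl).mono_left Set.Ioo_subset_Iio_self)]
    have : ∫⁻ u in Set.Ici (1:ℝ), V u = 0 := by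
      rw [setLIntegral_congr_fun measurableSet_Ici
        (fun u hu => hV u hu : EqOn V (fun _ => 0) (Set.Ici 1))]
      exact lintegral_zero
    rw [this, add_zero]
  have hlayerf : ∫⁻ x, f' x = ∫⁻ u in Set.Ioo (0:ℝ) 1, volume (A u) := by
    rw [layercake_le_one f' hf'm hf'1]
    exact hIoi_eq _ hAempty
  have hlayerg : ∫⁻ x, g' x = ∫⁻ u in Set.Ioo (0:ℝ) 1, volume (B u) := by
    rw [layercake_le_one g' hg'm hg'1]
    exact hIoi_eq _ hBempty
  -- bound for ∫ h'
  set h'' : ℝ → ℝ≥0∞ := fun z => min (h' z) 1 with hh''def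
  have hh''m : Measurable h'' := hh'm.min measurable_const
  have hh''1 : ∀ x, h'' x ≤ 1 := fun x => min_le_right _ _
  have hCineq : ∫⁻ u in Set.Ioo (0:ℝ) 1, volume (C u) ≤ ∫⁻ x, h' x := by
    have h1 : ∫⁻ u in Set.Ioo (0:ℝ) 1, volume (C u)
        = ∫⁻ u in Set.Ioo (0:ℝ) 1, volume {x : ℝ | ENNReal.ofReal u < h'' x} := by
      apply setLIntegral_congr_fun measurableSet_Ioo
      intro u hu
      dsimp only
      congr 1
      ext x
      simp only [hC, hh''def, Set.mem_setOf_eq, lt_min_iff, iff_self_and]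
      intro _
      exact ENNReal.ofReal_lt_one.2 hu.2
    rw [h1]
    calc ∫⁻ u in Set.Ioo (0:ℝ) 1, volume {x : ℝ | ENNReal.ofReal u < h'' x}
        ≤ ∫⁻ u in Set.Ioi (0:ℝ), volume {x : ℝ | ENNReal.ofReal u < h'' x} :=
          lintegral_mono_set Set.Ioo_subset_Ioi_self
      _ = ∫⁻ x, h'' x := (layercake_le_one h'' hh''m hh''1).symm
      _ ≤ ∫⁻ x, h' x := lintegral_mono fun x => min_le_left _ _
  -- measurability of level-volume functions
  have hvolA_meas : Measurable fun u : ℝ => volume (A u) := by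
    apply Antitone.measurable
    intro u v huv
    exact measure_mono fun x hx => lt_of_le_of_lt (ENNReal.ofReal_le_ofReal huv) hx
  have hvolB_meas : Measurable fun u : ℝ => volume (B u) := by
    apply Antitone.measurable
    intro u v huv
    exact measure_mono fun x hx => lt_of_le_of_lt (ENNReal.ofReal_le_ofReal huv) hx
  -- main normalized inequality
  have main : (∫⁻ x, f' x) ^ (1-t) * (∫⁻ x, g' x) ^ t ≤ ∫⁻ x, h' x := by
    calc (∫⁻ x, f' x) ^ (1-t) * (∫⁻ x, g' x) ^ t
        ≤ ENNReal.ofReal (1-t) * (∫⁻ x, f' x) + ENNReal.ofReal t * (∫⁻ x, g' x) :=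
          ennreal_amgm2 ht0 ht1 _ _
      _ = ∫⁻ u in Set.Ioo (0:ℝ) 1,
            (ENNReal.ofReal (1-t) * volume (A u) + ENNReal.ofReal t * volume (B u)) := by
          rw [hlayerf, hlayerg,
            lintegral_add_left ((hvolA_meas.const_mul _)),
            lintegral_const_mul' _ _ ENNReal.ofReal_ne_top,
            lintegral_const_mul' _ _ ENNReal.ofReal_ne_top]
      _ ≤ ∫⁻ u in Set.Ioo (0:ℝ) 1, volume (C u) := by
          apply setLIntegral_mono' measurableSet_Ioo
          intro u hu
          exact hkey u hu.1 hu.2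
      _ ≤ ∫⁻ x, h' x := hCineq
  -- denormalize
  have hf'int : ∫⁻ x, f' x = (∫⁻ x, f x) * Sf⁻¹ := by
    simp only [hf'def, div_eq_mul_inv]
    exact lintegral_mul_const' _ _ (by simp [hSf0])
  have hg'int : ∫⁻ x, g' x = (∫⁻ x, g x) * Sg⁻¹ := by
    simp only [hg'def, div_eq_mul_inv]
    exact lintegral_mul_const' _ _ (by simp [hSg0])
  have hh'int : ∫⁻ x, h' x = (∫⁻ x, h x) * N⁻¹ := by
    simp only [hh'def, div_eq_mul_inv]
    exact lintegral_mul_const' _ _ (by simp [hN0])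
  rw [hf'int, hg'int, hh'int, ENNReal.mul_rpow_of_nonneg _ _ h1t.le,
    ENNReal.mul_rpow_of_nonneg _ _ ht0.le, ENNReal.inv_rpow, ENNReal.inv_rpow] at main
  have hNsplit : (Sf ^ (1-t))⁻¹ * (Sg ^ t)⁻¹ = N⁻¹ := by
    rw [hN, ENNReal.mul_inv (Or.inl (by simp [ENNReal.rpow_eq_zero_iff, hSf0, hSf_top]))
      (Or.inl (by simp [ENNReal.rpow_eq_top_iff, hSf0, hSf_top]))]
  have hrearr : (∫⁻ x, f x) ^ (1-t) * (Sf ^ (1-t))⁻¹ * ((∫⁻ x, g x) ^ t * (Sg ^ t)⁻¹)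
      = ((∫⁻ x, f x) ^ (1-t) * (∫⁻ x, g x) ^ t) * N⁻¹ := by
    rw [← hNsplit]; ring
  rw [hrearr] at main
  exact (ENNReal.mul_le_mul_iff_left (by simp [hN_top]) (by simp [hN0])).1 main


/-- Prékopa–Leindler inequality on `Fin m → ℝ` for bounded, compactly supported
measurable `ℝ≥0∞`-valued functions. -/
lemma prekopa_leindler_pi {t : ℝ} (ht0 : 0 < t) (ht1 : t < 1) :
    ∀ (m : ℕ) (f g h : (Fin m → ℝ) → ℝ≥0∞), Measurable f → Measurable g → Measurable h →
    ∀ (Cf Cg : ℝ≥0∞), Cf ≠ ⊤ → Cg ≠ ⊤ →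
    (∀ x, f x ≤ Cf) → (∀ x, g x ≤ Cg) →
    ∀ (R : ℝ), (∀ x, f x ≠ 0 → ∀ i, |x i| ≤ R) → (∀ x, g x ≠ 0 → ∀ i, |x i| ≤ R) →
    (∀ x y, f x ^ (1 - t) * g y ^ t ≤ h (fun i => (1 - t) * x i + t * y i)) →
    (∫⁻ x, f x) ^ (1 - t) * (∫⁻ x, g x) ^ t ≤ ∫⁻ x, h x := by
  intro m
  induction m with
  | zero =>
    intro f g h hf hg hh Cf Cg hCf hCg hfb hgb R hfs hgs hPL
    have huniv : (volume : Measure (Fin 0 → ℝ)) Set.univ = 1 := by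
      rw [volume_pi, Measure.pi_univ]; simp
    rw [lintegral_unique, lintegral_unique, lintegral_unique, huniv, mul_one, mul_one, mul_one]
    have key := hPL default default
    have e1 : ∀ x : Fin 0 → ℝ, f x = f default := fun x => congrArg f (Subsingleton.elim _ _)
    have e2 : ∀ x : Fin 0 → ℝ, g x = g default := fun x => congrArg g (Subsingleton.elim _ _)
    have e3 : ∀ x : Fin 0 → ℝ, h x = h default := fun x => congrArg h (Subsingleton.elim _ _)
    rw [e1, e2, e3] at key ⊢
    exact key
  | succ m ih =>
    intro f g h hf hg hh Cf Cg hCf hCg hfb hgb R hfs hgs hPL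
    set e := MeasurableEquiv.piFinSuccAbove (fun _ : Fin (m+1) => ℝ) 0 with he
    have hmp : MeasurePreserving e volume volume :=
      volume_preserving_piFinSuccAbove (fun _ : Fin (m+1) => ℝ) 0
    have hsymm : ∀ (s : ℝ) (w : Fin m → ℝ), e.symm (s, w) = Fin.insertNth 0 s w := by
      intro s w; rfl
    -- coordinates of e.symm
    have hcoord0 : ∀ (s : ℝ) (w : Fin m → ℝ), e.symm (s, w) 0 = s := by
      intro s w; rw [hsymm]; simp
    have hcoordS : ∀ (s : ℝ) (w : Fin m → ℝ) (j : Fin m), e.symm (s, w) j.succ = w j := by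
      intro s w j
      rw [hsymm]
      have : (j.succ) = (0 : Fin (m+1)).succAbove j := by simp [Fin.succAbove_zero]
      rw [this, Fin.insertNth_apply_succAbove]
    -- marginals
    set F : ℝ → ℝ≥0∞ := fun s => ∫⁻ w, f (e.symm (s, w)) with hF
    set G : ℝ → ℝ≥0∞ := fun s => ∫⁻ w, g (e.symm (s, w)) with hG
    set H : ℝ → ℝ≥0∞ := fun s => ∫⁻ w, h (e.symm (s, w)) with hH
    have hfm' : Measurable (fun p : ℝ × (Fin m → ℝ) => f (e.symm p)) := hf.comp e.symm.measurable
    have hgm' : Measurable (fun p : ℝ × (Fin m → ℝ) => g (e.symm p)) := hg.comp e.symm.measurable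
    have hhm' : Measurable (fun p : ℝ × (Fin m → ℝ) => h (e.symm p)) := hh.comp e.symm.measurable
    have hFm : Measurable F := hfm'.lintegral_prod_right'
    have hGm : Measurable G := hgm'.lintegral_prod_right'
    have hHm : Measurable H := hhm'.lintegral_prod_right'
    -- integral identities
    have hint : ∀ (φ : (Fin (m+1) → ℝ) → ℝ≥0∞), Measurable φ →
        ∫⁻ x, φ x = ∫⁻ s, ∫⁻ w, φ (e.symm (s, w)) := by
      intro φ hφ
      rw [← (MeasurePreserving.symm e hmp).lintegral_comp hφ]
      exact lintegral_prod _ (hφ.comp e.symm.measurable).aemeasurable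
    -- the box and its volume
    set box : Set (Fin m → ℝ) := Set.pi Set.univ (fun _ => Set.Icc (-|R|) |R|) with hbox
    have hboxm : MeasurableSet box := MeasurableSet.univ_pi fun _ => measurableSet_Icc
    have hboxvol : volume box ≠ ⊤ := by
      rw [hbox, volume_pi_pi]
      exact (ENNReal.prod_lt_top fun _ _ => (by rw [Real.volume_Icc]; exact ENNReal.ofReal_lt_top)).ne
    -- marginal bounds
    have hbound : ∀ (φ : (Fin (m+1) → ℝ) → ℝ≥0∞) (C : ℝ≥0∞), (∀ x, φ x ≤ C) →
        (∀ x, φ x ≠ 0 → ∀ i, |x i| ≤ R) →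
        ∀ s, (∫⁻ w, φ (e.symm (s, w))) ≤ C * volume box := by
      intro φ C hφb hφs s
      calc (∫⁻ w, φ (e.symm (s, w))) ≤ ∫⁻ w, box.indicator (fun _ => C) w := by
            apply lintegral_mono
            intro w
            by_cases hw : w ∈ box
            · rw [Set.indicator_of_mem hw]; exact hφb _
            · rw [Set.indicator_of_notMem hw]
              by_contra hne
              apply hw
              intro j _
              have h0 : φ (e.symm (s, w)) ≠ 0 := by simpa using hne
              have := hφs _ h0 j.succ
              rw [hcoordS] at this
              have habs : |w j| ≤ |R| := this.trans (le_abs_self R)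
              exact abs_le.1 habs
        _ = C * volume box := by rw [lintegral_indicator hboxm, setLIntegral_const]
    -- marginal supports
    have hsupp : ∀ (φ : (Fin (m+1) → ℝ) → ℝ≥0∞), (∀ x, φ x ≠ 0 → ∀ i, |x i| ≤ R) →
        ∀ s, (∫⁻ w, φ (e.symm (s, w))) ≠ 0 → |s| ≤ R := by
      intro φ hφs s hs
      by_contra hsr
      apply hs
      have : ∀ w, φ (e.symm (s, w)) = 0 := by
        intro w
        by_contra h0
        exact hsr ((hcoord0 s w) ▸ hφs _ h0 0)
      simp [this]
    -- PL hypothesis for marginals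
    have hPLm : ∀ s r, F s ^ (1 - t) * G r ^ t ≤ H ((1 - t) * s + t * r) := by
      intro s r
      apply ih (fun w => f (e.symm (s, w))) (fun w => g (e.symm (r, w)))
        (fun w => h (e.symm ((1 - t) * s + t * r, w)))
        (hfm'.comp (measurable_prodMk_left)) (hgm'.comp (measurable_prodMk_left))
        (hhm'.comp (measurable_prodMk_left)) Cf Cg hCf hCg
        (fun w => hfb _) (fun w => hgb _) R
      · intro w hw j
        have := hfs _ hw j.succ
        rwa [hcoordS] at this
      · intro w hw j
        have := hgs _ hw j.succ
        rwa [hcoordS] at this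
      · intro x y
        have key := hPL (e.symm (s, x)) (e.symm (r, y))
        have heq : (fun i => (1 - t) * (e.symm (s, x)) i + t * (e.symm (r, y)) i)
            = e.symm ((1 - t) * s + t * r, fun j => (1 - t) * x j + t * y j) := by
          funext i
          induction i using Fin.cases with
          | zero => rw [hcoord0, hcoord0, hcoord0]
          | succ j => rw [hcoordS, hcoordS, hcoordS]
        rwa [heq] at key
    -- conclude via dimension 1
    rw [hint f hf, hint g hg, hint h hh]
    exact prekopa_leindler_dim1 ht0 ht1 F G H hFm hGm hHm (Cf * volume box) (Cg * volume box)
      (ENNReal.mul_ne_top hCf hboxvol) (ENNReal.mul_ne_top hCg hboxvol)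
      (hbound f Cf hfb hfs) (hbound g Cg hgb hgs) hPLm

/-- For a convex body `K' ⊆ ℝ^{n+1}` with `Z(c) := ∫_{K'} e^{-c x₀} dx`,
the function `c ↦ c^{n+1} Z(c)` is logconcave on `(0, ∞)`: for all `c, d > 0` and `t ∈ [0,1]`,
`((1-t)c + td)^{n+1} Z((1-t)c + td) ≥ (c^{n+1} Z(c))^{1-t} (d^{n+1} Z(d))^{t}`. -/
theorem logconcavity_of_partition_function
    (n : ℕ) (hn : 1 ≤ n) (K' : Set (Fin (n + 1) → ℝ))
    (hK_compact : IsCompact K') (hK_convex : Convex ℝ K')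
    (hK_interior : (interior K').Nonempty)
    (Z : ℝ → ℝ) (hZ : ∀ c, Z c = ∫ x in K', Real.exp (-(c * x 0)))
    (c d : ℝ) (hc : 0 < c) (hd : 0 < d) (t : ℝ) (ht0 : 0 ≤ t) (ht1 : t ≤ 1) :
    (c ^ (n + 1) * Z c) ^ (1 - t) * (d ^ (n + 1) * Z d) ^ t
      ≤ ((1 - t) * c + t * d) ^ (n + 1) * Z ((1 - t) * c + t * d) := by
  -- edge cases
  rcases ht0.eq_or_lt with rfl | ht0'
  · simp
  rcases ht1.eq_or_lt with rfl | ht1'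
  · simp
  set e : ℝ := (1 - t) * c + t * d with he
  have h1t : (0:ℝ) < 1 - t := by linarith
  have he0 : 0 < e := by positivity
  -- the integral after change of variables
  set I : ℝ → ℝ := fun a => ∫ y in a • K', Real.exp (-(y 0)) with hI
  have hexp_cont : Continuous fun y : Fin (n+1) → ℝ => Real.exp (-(y 0)) :=
    Real.continuous_exp.comp ((continuous_apply (0 : Fin (n+1))).neg)
  have hInonneg : ∀ a : ℝ, 0 ≤ I a :=
    fun a => setIntegral_nonneg (hK_compact.smul a).isClosed.measurableSet
      (fun y _ => (Real.exp_pos _).le)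
  have claim1 : ∀ a : ℝ, 0 < a → a ^ (n+1) * Z a = I a := by
    intro a ha
    have key := Measure.setIntegral_comp_smul_of_pos volume
      (fun y : Fin (n+1) → ℝ => Real.exp (-(y 0))) K' ha
    have hfr : Module.finrank ℝ (Fin (n+1) → ℝ) = n + 1 := by simp
    rw [hfr] at key
    have hZa : Z a = (a ^ (n+1))⁻¹ * I a := by
      rw [hZ a]
      have e2 : ∀ x : Fin (n+1) → ℝ, Real.exp (-(a * x 0)) = Real.exp (-((a • x) 0)) := by
        intro x; simp [smul_eq_mul]
      simp_rw [e2]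
      rw [key]
      simp [hI, smul_eq_mul]
    rw [hZa]
    field_simp
  -- lintegral version
  set W : ℝ → ℝ≥0∞ := fun a => ∫⁻ y in a • K', ENNReal.ofReal (Real.exp (-(y 0))) with hW
  have claim3 : ∀ a : ℝ, ENNReal.ofReal (I a) = W a := by
    intro a
    apply ofReal_integral_eq_lintegral_ofReal
    · exact (hexp_cont.continuousOn).integrableOn_compact (hK_compact.smul a)
    · exact Filter.Eventually.of_forall (fun y => (Real.exp_pos _).le)
  -- bounding data
  obtain ⟨M₀, hM₀⟩ := isBounded_iff_forall_norm_le.1 hK_compact.isBounded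
  set M₁ : ℝ := max M₀ 0 with hM₁
  set R : ℝ := (max c d) * M₁ with hR
  have hRbound : ∀ a : ℝ, 0 < a → a ≤ max c d → ∀ x ∈ a • K', ∀ i, |x i| ≤ R := by
    intro a ha hamax x hx i
    obtain ⟨u, hu, rfl⟩ := mem_smul_set.1 hx
    have h1 : |u i| ≤ M₁ := by
      have hni := norm_le_pi_norm u i
      rw [Real.norm_eq_abs] at hni
      exact hni.trans ((hM₀ u hu).trans (le_max_left _ _))
    have : |(a • u) i| = a * |u i| := by
      simp [abs_mul, abs_of_pos ha]
    rw [this]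
    calc a * |u i| ≤ (max c d) * M₁ := by
          apply mul_le_mul hamax h1 (abs_nonneg _) (le_trans ha.le hamax)
      _ = R := rfl
  -- indicator functions
  set fE : ℝ → (Fin (n+1) → ℝ) → ℝ≥0∞ := fun a x =>
    (a • K').indicator (fun y => ENNReal.ofReal (Real.exp (-(y 0)))) x with hfE
  have hfEm : ∀ a : ℝ, Measurable (fE a) := by
    intro a
    exact (ENNReal.measurable_ofReal.comp hexp_cont.measurable).indicator
      (hK_compact.smul a).isClosed.measurableSet
  have hfEW : ∀ a : ℝ, ∫⁻ x, fE a x = W a := by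
    intro a
    simp only [hfE]
    rw [lintegral_indicator (hK_compact.smul a).isClosed.measurableSet]
  have hfEb : ∀ a : ℝ, 0 < a → a ≤ max c d → ∀ x, fE a x ≤ ENNReal.ofReal (Real.exp R) := by
    intro a ha hamax x
    by_cases hx : x ∈ a • K'
    · simp only [hfE]; rw [Set.indicator_of_mem hx]
      apply ENNReal.ofReal_le_ofReal
      apply Real.exp_le_exp.2
      have := hRbound a ha hamax x hx 0
      have h2 : -(x 0) ≤ |x 0| := neg_le_abs _
      linarith [abs_le.1 this]
    · simp only [hfE]; rw [Set.indicator_of_notMem hx]; exact zero_le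
  have hfEs : ∀ a : ℝ, 0 < a → a ≤ max c d → ∀ x, fE a x ≠ 0 → ∀ i, |x i| ≤ R := by
    intro a ha hamax x hx i
    have hmem : x ∈ a • K' := by
      by_contra hmem
      exact hx (by simp only [hfE]; rw [Set.indicator_of_notMem hmem])
    exact hRbound a ha hamax x hmem i
  -- the PL pointwise hypothesis
  have hPL : ∀ x y, fE c x ^ (1 - t) * fE d y ^ t ≤ fE e (fun i => (1 - t) * x i + t * y i) := by
    intro x y
    by_cases hx : x ∈ c • K'
    · by_cases hy : y ∈ d • K'
      · -- membership of the combination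
        obtain ⟨u, hu, rfl⟩ := mem_smul_set.1 hx
        obtain ⟨v, hv, rfl⟩ := mem_smul_set.1 hy
        have hmemz : (fun i => (1 - t) * (c • u) i + t * (d • v) i) ∈ e • K' := by
          have hw : ((1 - t) * c / e) • u + (t * d / e) • v ∈ K' := by
            apply hK_convex hu hv
            · positivity
            · positivity
            · field_simp; exact he.symm
          refine ⟨_, hw, ?_⟩
          funext i
          simp only [Pi.add_apply, Pi.smul_apply, smul_eq_mul]
          field_simp
        simp only [hfE]
        rw [Set.indicator_of_mem hx, Set.indicator_of_mem hy, Set.indicator_of_mem hmemz]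
        rw [ENNReal.ofReal_rpow_of_pos (Real.exp_pos _), ENNReal.ofReal_rpow_of_pos (Real.exp_pos _),
          ← ENNReal.ofReal_mul (by positivity), ← Real.exp_mul, ← Real.exp_mul, ← Real.exp_add]
        apply ENNReal.ofReal_le_ofReal
        apply Real.exp_le_exp.2
        simp only [Pi.smul_apply, smul_eq_mul]
        apply le_of_eq
        ring
      · simp only [hfE]
        rw [Set.indicator_of_notMem hy]
        rw [ENNReal.zero_rpow_of_pos ht0', mul_zero]
        exact zero_le
    · simp only [hfE]
      rw [Set.indicator_of_notMem hx]
      rw [ENNReal.zero_rpow_of_pos h1t, zero_mul]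
      exact zero_le
  -- apply Prékopa–Leindler
  have hmain := prekopa_leindler_pi ht0' ht1' (n+1) (fE c) (fE d) (fE e)
    (hfEm c) (hfEm d) (hfEm e)
    (ENNReal.ofReal (Real.exp R)) (ENNReal.ofReal (Real.exp R))
    ENNReal.ofReal_ne_top ENNReal.ofReal_ne_top
    (hfEb c hc (le_max_left _ _)) (hfEb d hd (le_max_right _ _))
    R (hfEs c hc (le_max_left _ _)) (hfEs d hd (le_max_right _ _)) hPL
  rw [hfEW, hfEW, hfEW] at hmain
  -- translate back to reals
  rw [← claim3, ← claim3, ← claim3] at hmain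
  rw [ENNReal.ofReal_rpow_of_nonneg (hInonneg c) h1t.le,
    ENNReal.ofReal_rpow_of_nonneg (hInonneg d) ht0'.le,
    ← ENNReal.ofReal_mul (by positivity)] at hmain
  have hfinal : I c ^ (1 - t) * I d ^ t ≤ I e :=
    (ENNReal.ofReal_le_ofReal_iff (hInonneg e)).1 hmain
  rw [claim1 c hc, claim1 d hd, claim1 e he0]
  exact hfinal
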